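/- arXiv:2509.02892 — 2 statements merged into one kernel-verified Lean document; each statement's English description precedes it below -/
import Mathlib

section
/- Under unconfoundedness given X, consistency, and positivity given X, the conditional mean of each potential outcome is identified from observables: for each t ∈ {0,1}, P-almost surely E[Y_t | σ(X)] · E[1{T=t} | σ(X)] = E[Y · 1{T=t} | σ(X)], equivalently E[Y_t | σ(X)] = E[Y · 1{T=t} | σ(X)] / E[1{T=t} | σ(X)]. -/
/-!
Let `κ ω` be the regular conditional distribution given `σ(X)` (`condExpKernel`). Unconfoundedness
makes `Y_t` and the event `{T = t}` independent under `κ ω` for almost every `ω`; it suffices to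
check this on the countable π-system `{Y_t ≤ q}`, `q ∈ ℚ`, where the kernel factorizations hold
simultaneously. Hence `∫_{T = t} Y_t dκ ω = κ ω {T = t} · ∫ Y_t dκ ω`, that is
`E[Y_t 1{T=t} | X] = E[Y_t | X] · P(T = t | X)`. Consistency gives `Y 1{T=t} = Y_t 1{T=t}`, and
positivity allows dividing by `P(T = t | X)`.
-/

open MeasureTheory ProbabilityTheory

noncomputable section

/-- The real-valued indicator of the event `T = t` for a binary treatment `T`. -/
def indicT {Ω : Type*} (T : Ω → Bool) (t : Bool) : Ω → ℝ :=
  fun ω => if T ω = t then 1 else 0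

/-- The adjustment-formula ATE of a triple (covariates `X`, binary treatment `T`, outcome `Y`):
`E[ E[Y·1{T=1} | σ(X)] / E[1{T=1} | σ(X)] − E[Y·1{T=0} | σ(X)] / E[1{T=0} | σ(X)] ]`. -/
def adjATE {Ω β : Type*} [MeasurableSpace Ω] [MeasurableSpace β]
    (μ : Measure Ω) (X : Ω → β) (T : Ω → Bool) (Y : Ω → ℝ) : ℝ :=
  ∫ ω,
    ((μ[fun ω' => Y ω' * indicT T true ω' | MeasurableSpace.comap X inferInstance]) ω
        / (μ[indicT T true | MeasurableSpace.comap X inferInstance]) ω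
      - (μ[fun ω' => Y ω' * indicT T false ω' | MeasurableSpace.comap X inferInstance]) ω
        / (μ[indicT T false | MeasurableSpace.comap X inferInstance]) ω) ∂μ

/-- Positivity given `X`: `0 < E[1{T=1} | σ(X)] < 1` almost surely. -/
def PositivityGiven {Ω β : Type*} [MeasurableSpace Ω] [MeasurableSpace β]
    (μ : Measure Ω) (X : Ω → β) (T : Ω → Bool) : Prop :=
  ∀ᵐ ω ∂μ, 0 < (μ[indicT T true | MeasurableSpace.comap X inferInstance]) ω ∧
    (μ[indicT T true | MeasurableSpace.comap X inferInstance]) ω < 1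

end

open Set

section

variable {Ω : Type*} {m mΩ : MeasurableSpace Ω}

theorem map_restrict_eq_smul_map_of_forall_rat {ν : Measure Ω} [IsProbabilityMeasure ν]
    {Z : Ω → ℝ} (hZ : Measurable Z) {A : Set Ω}
    (h : ∀ q : ℚ, ν (Z ⁻¹' Iic (q : ℝ) ∩ A) = ν (Z ⁻¹' Iic (q : ℝ)) * ν A) :
    (ν.restrict A).map Z = ν A • ν.map Z := by
  have : IsFiniteMeasure (ν A • ν.map Z) :=
    ⟨by simpa using ENNReal.mul_lt_top (measure_lt_top ν A) (measure_lt_top _ _)⟩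
  refine ext_of_generate_finite _
    (BorelSpace.measurable_eq.trans Real.borel_eq_generateFrom_Iic_rat) Real.isPiSystem_Iic_rat ?_ ?_
  · simp only [mem_iUnion, mem_singleton_iff]
    rintro _ ⟨q, rfl⟩
    rw [Measure.map_apply hZ measurableSet_Iic, Measure.restrict_apply (hZ measurableSet_Iic),
      Measure.smul_apply, Measure.map_apply hZ measurableSet_Iic, h, smul_eq_mul, mul_comm]
  · simp [Measure.map_apply hZ MeasurableSet.univ]

theorem setIntegral_eq_mul_integral_of_forall_rat {ν : Measure Ω} [IsProbabilityMeasure ν]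
    {Z : Ω → ℝ} (hZ : Measurable Z) {A : Set Ω}
    (h : ∀ q : ℚ, ν (Z ⁻¹' Iic (q : ℝ) ∩ A) = ν (Z ⁻¹' Iic (q : ℝ)) * ν A) :
    ∫ x in A, Z x ∂ν = ν.real A * ∫ x, Z x ∂ν :=
  calc ∫ x in A, Z x ∂ν = ∫ y, y ∂(ν.restrict A).map Z :=
        (integral_map hZ.aemeasurable aestronglyMeasurable_id).symm
    _ = ν.real A * ∫ y, y ∂ν.map Z := by
        rw [map_restrict_eq_smul_map_of_forall_rat hZ h, integral_smul_measure, smul_eq_mul,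
          measureReal_def]
    _ = ν.real A * ∫ x, Z x ∂ν := by
        congr 1
        exact integral_map hZ.aemeasurable aestronglyMeasurable_id

variable [StandardBorelSpace Ω] (hm : m ≤ mΩ)
  {μ : Measure Ω} [IsFiniteMeasure μ] {β : Type*} [MeasurableSpace β]
  {Z : Ω → ℝ} {g : Ω → β} {s : Set β}

theorem condExp_indicator_ae_eq_mul_of_condIndepFun_of_measurable
    (hZm : Measurable Z) (hZ : Integrable Z μ) (hg : Measurable g) (hs : MeasurableSet s)
    (h : CondIndepFun m hm Z g (μ := μ)) :
    μ[(g ⁻¹' s).indicator Z | m] =ᵐ[μ] μ[Z | m] * μ⟦g ⁻¹' s | m⟧ := by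
  have hA : MeasurableSet (g ⁻¹' s) := hg hs
  have hfactor : ∀ᵐ ω ∂μ, ∀ q : ℚ, condExpKernel μ m ω (Z ⁻¹' Iic (q : ℝ) ∩ g ⁻¹' s)
      = condExpKernel μ m ω (Z ⁻¹' Iic (q : ℝ)) * condExpKernel μ m ω (g ⁻¹' s) :=
    ae_of_ae_trim hm <| ae_all_iff.2 fun q ↦
      Kernel.IndepFun.meas_inter h ⟨_, measurableSet_Iic, rfl⟩ ⟨s, hs, rfl⟩
  filter_upwards [hfactor, condExp_ae_eq_integral_condExpKernel hm (hZ.indicator hA),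
    condExp_ae_eq_integral_condExpKernel hm hZ, condExpKernel_ae_eq_condExp hm hA]
    with ω hω hZA hZω hAω
  rw [hZA, Pi.mul_apply, hZω, ← hAω, integral_indicator hA,
    setIntegral_eq_mul_integral_of_forall_rat hZm hω, mul_comm]

theorem condExp_indicator_ae_eq_mul_of_condIndepFun
    (hZ : Integrable Z μ) (hg : Measurable g) (hs : MeasurableSet s)
    (h : CondIndepFun m hm Z g (μ := μ)) :
    μ[(g ⁻¹' s).indicator Z | m] =ᵐ[μ] μ[Z | m] * μ⟦g ⁻¹' s | m⟧ := by
  set Z' := hZ.1.mk Z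
  have hZZ' : Z =ᵐ[μ] Z' := hZ.1.ae_eq_mk
  have h' : CondIndepFun m hm Z' g (μ := μ) :=
    Kernel.IndepFun.congr' h
      (Measure.ae_ae_of_ae_comp (by rwa [condExpKernel_comp_trim hm]))
      (ae_of_all _ fun _ ↦ .rfl)
  have hind : (g ⁻¹' s).indicator Z =ᵐ[μ] (g ⁻¹' s).indicator Z' :=
    hZZ'.mono fun ω hω ↦ by simp only [indicator, hω]
  calc μ[(g ⁻¹' s).indicator Z | m] =ᵐ[μ] μ[(g ⁻¹' s).indicator Z' | m] := condExp_congr_ae hind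
    _ =ᵐ[μ] μ[Z' | m] * μ⟦g ⁻¹' s | m⟧ :=
      condExp_indicator_ae_eq_mul_of_condIndepFun_of_measurable hm
        hZ.1.stronglyMeasurable_mk.measurable (hZ.congr hZZ') hg hs h'
    _ =ᵐ[μ] μ[Z | m] * μ⟦g ⁻¹' s | m⟧ := (condExp_congr_ae hZZ').symm.mul .rfl

end

section

variable {Ω : Type*} {m mΩ : MeasurableSpace Ω} {μ : Measure Ω} {T : Ω → Bool}

theorem indicT_eq_indicator (T : Ω → Bool) (t : Bool) : indicT T t = (T ⁻¹' {t}).indicator 1 := by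
  ext ω
  by_cases h : T ω = t <;> simp [indicT, h]

theorem indicT_false_eq_one_sub (T : Ω → Bool) : indicT T false = 1 - indicT T true := by
  ext ω
  by_cases h : T ω <;> simp [indicT, h]

theorem mul_indicT_eq_indicator_of_consistency {Y0 Y1 Y : Ω → ℝ}
    (hY : Y = fun ω ↦ if T ω then Y1 ω else Y0 ω) (t : Bool) :
    (fun ω ↦ Y ω * indicT T t ω) = (T ⁻¹' {t}).indicator (if t then Y1 else Y0) := by
  ext ω
  by_cases h : T ω = t
  · cases t <;> simp [indicT, hY, h]
  · simp [indicT, h]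

theorem ae_pos_condExp_indicT (hm : m ≤ mΩ) [IsFiniteMeasure μ] (hT : Measurable T)
    (hpos : ∀ᵐ ω ∂μ, 0 < (μ[indicT T true | m]) ω ∧ (μ[indicT T true | m]) ω < 1) (t : Bool) :
    ∀ᵐ ω ∂μ, 0 < (μ[indicT T t | m]) ω := by
  cases t
  · have hint : Integrable (indicT T true) μ := by
      rw [indicT_eq_indicator]
      exact (integrable_const 1).indicator (hT (measurableSet_singleton true))
    have hcompl : μ[indicT T false | m] =ᵐ[μ] 1 - μ[indicT T true | m] := by
      have hsub := condExp_sub (integrable_const (1 : ℝ)) hint m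
      rw [condExp_const hm] at hsub
      rwa [indicT_false_eq_one_sub]
    filter_upwards [hpos, hcompl] with ω hω hωc
    rw [hωc, Pi.sub_apply, Pi.one_apply, sub_pos]
    exact hω.2
  · exact hpos.mono fun ω hω ↦ hω.1

end

theorem statement0_general {Ω : Type*} [MeasurableSpace Ω] [StandardBorelSpace Ω]
    {d : ℕ} (μ : Measure Ω) [IsProbabilityMeasure μ]
    (X : Ω → Fin d → ℝ) (T : Ω → Bool) (Y0 Y1 Y : Ω → ℝ)
    (hX : Measurable X) (hT : Measurable T)
    (hY0 : Integrable Y0 μ) (hY1 : Integrable Y1 μ)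
    (hunconf : CondIndepFun (MeasurableSpace.comap X inferInstance) hX.comap_le
      (fun ω => (Y0 ω, Y1 ω)) T μ)
    (hpos : PositivityGiven μ X T)
    (hY : Y = fun ω => if T ω then Y1 ω else Y0 ω) :
    ∀ t : Bool,
      (∀ᵐ ω ∂μ,
        (μ[if t then Y1 else Y0 | MeasurableSpace.comap X inferInstance]) ω
            * (μ[indicT T t | MeasurableSpace.comap X inferInstance]) ω
          = (μ[fun ω' => Y ω' * indicT T t ω' | MeasurableSpace.comap X inferInstance]) ω) ∧
      (∀ᵐ ω ∂μ,
        (μ[if t then Y1 else Y0 | MeasurableSpace.comap X inferInstance]) ω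
          = (μ[fun ω' => Y ω' * indicT T t ω' | MeasurableSpace.comap X inferInstance]) ω
            / (μ[indicT T t | MeasurableSpace.comap X inferInstance]) ω) := by
  intro t
  have hYt : Integrable (if t then Y1 else Y0) μ := by cases t <;> assumption
  have hunconf_t : CondIndepFun _ hX.comap_le (if t then Y1 else Y0) T μ := by
    cases t
    exacts [hunconf.comp measurable_fst measurable_id, hunconf.comp measurable_snd measurable_id]
  have hmul : ∀ᵐ ω ∂μ, (μ[if t then Y1 else Y0 | MeasurableSpace.comap X inferInstance]) ω
      * (μ[indicT T t | MeasurableSpace.comap X inferInstance]) ω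
        = (μ[fun ω' => Y ω' * indicT T t ω' | MeasurableSpace.comap X inferInstance]) ω := by
    rw [mul_indicT_eq_indicator_of_consistency hY, indicT_eq_indicator]
    exact (condExp_indicator_ae_eq_mul_of_condIndepFun hX.comap_le hYt hT
      (measurableSet_singleton t) hunconf_t).symm
  refine ⟨hmul, ?_⟩
  filter_upwards [hmul, ae_pos_condExp_indicT hX.comap_le hT hpos t] with ω hω hω_pos
  rw [eq_div_iff hω_pos.ne', hω]

/-- Under unconfoundedness given `X`, consistency and positivity given `X`, the conditional
mean of each potential outcome is identified from observables: for each `t ∈ {0,1}`, a.s.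
`E[Y_t | σ(X)] · E[1{T=t} | σ(X)] = E[Y · 1{T=t} | σ(X)]`, equivalently
`E[Y_t | σ(X)] = E[Y · 1{T=t} | σ(X)] / E[1{T=t} | σ(X)]`. -/
theorem statement0 {Ω : Type*} [MeasurableSpace Ω] [StandardBorelSpace Ω] [Nonempty Ω]
    {d : ℕ} (μ : Measure Ω) [IsProbabilityMeasure μ]
    (X : Ω → Fin d → ℝ) (T : Ω → Bool) (Y0 Y1 Y : Ω → ℝ)
    (hX : Measurable X) (hT : Measurable T)
    (hY0 : Integrable Y0 μ) (hY1 : Integrable Y1 μ)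
    (hunconf : CondIndepFun (MeasurableSpace.comap X inferInstance) hX.comap_le
      (fun ω => (Y0 ω, Y1 ω)) T μ)
    (hpos : PositivityGiven μ X T)
    (hY : Y = fun ω => if T ω then Y1 ω else Y0 ω) :
    ∀ t : Bool,
      (∀ᵐ ω ∂μ,
        (μ[if t then Y1 else Y0 | MeasurableSpace.comap X inferInstance]) ω
            * (μ[indicT T t | MeasurableSpace.comap X inferInstance]) ω
          = (μ[fun ω' => Y ω' * indicT T t ω' | MeasurableSpace.comap X inferInstance]) ω) ∧
      (∀ᵐ ω ∂μ,
        (μ[if t then Y1 else Y0 | MeasurableSpace.comap X inferInstance]) ω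
          = (μ[fun ω' => Y ω' * indicT T t ω' | MeasurableSpace.comap X inferInstance]) ω
            / (μ[indicT T t | MeasurableSpace.comap X inferInstance]) ω) :=
  statement0_general μ X T Y0 Y1 Y hX hT hY0 hY1 hunconf hpos hY
end

section
/- (Honest form of Proposition 1(ii): non-identifiability of the confounding structure.) There exist, on suitable probability spaces, two models (X, T, Z_i, ε_i, Y_i), i = 1, 2, each of the form of the confounded additive model Y_i = X + T + Z_i − E[Z_i] + ε_i with Z_i independent of (X, T), ε_i ~ N(0,1) independent of (X, T, Z_i), and positivity given X, with Z_1 ~ Bernoulli(1/2) and Z_2 ~ N(1/2, 1), such that: (a) both models have conditional mean E[Y_i | σ(X,T)] = X + T P-almost surely and hence equal adjustment-formula ATE A(X,T,Y_1) = A(X,T,Y_2) = 1; (b) the potential-outcome ATE of each model (with Y_i(t) = X + t + Z_i − E[Z_i] + ε_i) equals 1; (c) E[(Y_1 − (X+T))²] = 5/4 ≠ 2 = E[(Y_2 − (X+T))²], so the conditional distributions of Y_1 and Y_2 given (X, T) differ. -/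
/-! Take `X ≡ 0`, `T` a fair coin and `Z₁, Z₂, ε₁, ε₂` further independent coordinates of a
product space. As `σ(X)` is trivial and the noise `Z − E Z + ε` is independent of `(X, T)`, the
conditional mean given `(X, T)` and the adjustment formula only see `E[noise] = 0`, whatever the
law of `Z`: they give `X + T` and `1` in both models. The residual second moment is
`Var Z + Var ε`, i.e. `1/4 + 1` against `1 + 1`. It is a functional of the joint law of
`((X, T), Y)`, which is the law of `(X, T)` composed with the conditional distribution of `Y`,
so the conditional distributions cannot agree almost everywhere. -/

open MeasureTheory ProbabilityTheory

noncomputable section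

/-- The Bernoulli(1/2) measure on `ℝ`, giving mass 1/2 to each of 0 and 1. -/
def bernoulliHalf : Measure ℝ :=
  (1 / 2 : ENNReal) • Measure.dirac (0 : ℝ) + (1 / 2 : ENNReal) • Measure.dirac (1 : ℝ)

section General

variable {Ω β : Type*} [MeasurableSpace Ω] [MeasurableSpace β] {μ : Measure Ω}

lemma measurable_indicT {T : Ω → Bool} (hT : Measurable T) (t : Bool) :
    Measurable (indicT T t) :=
  measurable_const.ite (hT (measurableSet_singleton t)) measurable_const

lemma integrable_indicT [IsFiniteMeasure μ] {T : Ω → Bool} (hT : Measurable T) (t : Bool) :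
    Integrable (indicT T t) μ := by
  refine Integrable.of_bound (measurable_indicT hT t).aestronglyMeasurable 1
    (ae_of_all _ fun ω => ?_)
  unfold indicT; split_ifs <;> simp

lemma condExp_comap_add_of_indepFun [IsFiniteMeasure μ] {V : Ω → β} (hV : Measurable V)
    {f U : Ω → ℝ} (hf : StronglyMeasurable[MeasurableSpace.comap V inferInstance] f)
    (hfi : Integrable f μ) (hU : Measurable U) (hUi : Integrable U μ) (hind : IndepFun V U μ) :
    μ[f + U | MeasurableSpace.comap V inferInstance] =ᵐ[μ] f + fun _ => μ[U] := by
  have hle := hV.comap_le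
  filter_upwards [condExp_add hfi hUi (MeasurableSpace.comap V inferInstance),
    condExp_indep_eq hU.comap_le hle (comap_measurable U).stronglyMeasurable
      ((IndepFun_iff_Indep _ _ _).mp hind.symm)] with ω hadd hU'
  rw [hadd, Pi.add_apply, condExp_of_stronglyMeasurable hle hf hfi, hU', Pi.add_apply]

lemma adjATE_const [IsProbabilityMeasure μ] (x : β) (T : Ω → Bool) (Y : Ω → ℝ) :
    adjATE μ (fun _ => x) T Y
      = (∫ ω, Y ω * indicT T true ω ∂μ) / μ[indicT T true]
        - (∫ ω, Y ω * indicT T false ω ∂μ) / μ[indicT T false] := by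
  simp [adjATE, condExp_bot]

lemma positivityGiven_const [IsProbabilityMeasure μ] (x : β) {T : Ω → Bool}
    (h₀ : 0 < μ[indicT T true]) (h₁ : μ[indicT T true] < 1) :
    PositivityGiven μ (fun _ => x) T := by
  simp [PositivityGiven, condExp_bot, h₀, h₁]

lemma adjATE_const_indicT_add [IsProbabilityMeasure μ] (x : β) {T : Ω → Bool} {U : Ω → ℝ}
    (hT : Measurable T) (hU : Integrable U μ) (hind : IndepFun U T μ)
    (h₁ : μ[indicT T true] ≠ 0) (h₀ : μ[indicT T false] ≠ 0) :
    adjATE μ (fun _ => x) T (fun ω => indicT T true ω + U ω) = 1 := by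
  have hUT (t : Bool) : IndepFun U (indicT T t) μ :=
    hind.comp measurable_id (measurable_indicT measurable_id t)
  have hmul (t : Bool) : ∫ ω, U ω * indicT T t ω ∂μ = μ[U] * μ[indicT T t] :=
    (hUT t).integral_fun_mul_eq_mul_integral hU.1 (integrable_indicT hT t).1
  have htrue (ω : Ω) : (indicT T true ω + U ω) * indicT T true ω
      = indicT T true ω + U ω * indicT T true ω := by
    by_cases h : T ω <;> simp [indicT, h]
  have hfalse (ω : Ω) :
      (indicT T true ω + U ω) * indicT T false ω = U ω * indicT T false ω := by
    by_cases h : T ω <;> simp [indicT, h]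
  rw [adjATE_const]
  simp only [htrue, hfalse]
  have hint : Integrable (fun ω => U ω * indicT T true ω) μ :=
    (hUT true).integrable_mul hU (integrable_indicT hT true)
  rw [integral_add (integrable_indicT hT true) hint, hmul, hmul]
  field_simp
  ring

lemma integral_sq_sub_integral_add_of_indepFun [IsProbabilityMeasure μ] {Z ε : Ω → ℝ}
    (hZ : MemLp Z 2 μ) (hε : MemLp ε 2 μ) (hind : IndepFun Z ε μ) (hε₀ : μ[ε] = 0) :
    ∫ ω, (Z ω - μ[Z] + ε ω) ^ 2 ∂μ = Var[Z; μ] + Var[ε; μ] := by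
  rw [← hind.variance_add hZ hε, variance_eq_integral (hZ.aemeasurable.add hε.aemeasurable)]
  simp only [Pi.add_apply]
  rw [integral_add (hZ.integrable one_le_two) (hε.integrable one_le_two), hε₀]
  congr with ω
  ring

lemma integral_comp_prodMk_eq_of_condDistrib_ae_eq {γ : Type*} [MeasurableSpace γ]
    [StandardBorelSpace γ] [Nonempty γ] [IsFiniteMeasure μ] {V : Ω → β} {Y₁ Y₂ : Ω → γ}
    (hV : Measurable V) (hY₁ : Measurable Y₁) (hY₂ : Measurable Y₂)
    (h : ∀ᵐ b ∂μ.map V, condDistrib Y₁ V μ b = condDistrib Y₂ V μ b)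
    {g : β × γ → ℝ} (hg : Measurable g) :
    ∫ ω, g (V ω, Y₁ ω) ∂μ = ∫ ω, g (V ω, Y₂ ω) ∂μ := by
  rw [← integral_map (hV.prodMk hY₁).aemeasurable hg.aestronglyMeasurable,
    ← integral_map (hV.prodMk hY₂).aemeasurable hg.aestronglyMeasurable,
    ← compProd_map_condDistrib hY₁.aemeasurable, ← compProd_map_condDistrib hY₂.aemeasurable,
    Measure.compProd_congr h]

end General

instance : IsProbabilityMeasure bernoulliHalf where
  measure_univ := by simp [bernoulliHalf, ENNReal.inv_two_add_inv_two]

lemma integrable_bernoulliHalf (f : ℝ → ℝ) : Integrable f bernoulliHalf := by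
  rw [bernoulliHalf, integrable_add_measure]
  exact ⟨(integrable_dirac enorm_lt_top).smul_measure (by simp),
    (integrable_dirac enorm_lt_top).smul_measure (by simp)⟩

lemma integral_bernoulliHalf (f : ℝ → ℝ) : ∫ x, f x ∂bernoulliHalf = (f 0 + f 1) / 2 := by
  rw [bernoulliHalf, integral_add_measure, integral_smul_measure, integral_smul_measure,
    integral_dirac, integral_dirac]
  · simp; ring
  all_goals exact (integrable_dirac enorm_lt_top).smul_measure (by simp)

lemma memLp_id_bernoulliHalf : MemLp id 2 bernoulliHalf :=
  (memLp_two_iff_integrable_sq aestronglyMeasurable_id).2 (integrable_bernoulliHalf _)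

lemma variance_id_bernoulliHalf : Var[id; bernoulliHalf] = 1 / 4 := by
  rw [variance_eq_integral aemeasurable_id]
  simp only [integral_bernoulliHalf, id]
  norm_num

namespace ConfoundedExample

/-- The coordinate laws: coordinate `0` drives the treatment, `1` and `2` are the confounders
`Z₁`, `Z₂`, and `3` and `4` are the noises `ε₁`, `ε₂`. -/
def ν : Fin 5 → Measure ℝ :=
  ![bernoulliHalf, bernoulliHalf, gaussianReal (1 / 2) 1, gaussianReal 0 1, gaussianReal 0 1]

instance (k : Fin 5) : IsProbabilityMeasure (ν k) := by
  fin_cases k <;> dsimp [ν] <;> infer_instance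

def P : Measure (Fin 5 → ℝ) := Measure.pi ν

instance : IsProbabilityMeasure P := by unfold P; infer_instance

def X : (Fin 5 → ℝ) → ℝ := fun _ => 0

def T : (Fin 5 → ℝ) → Bool := fun ω => decide (ω 0 = 1)

def noise (i j : Fin 5) : (Fin 5 → ℝ) → ℝ := fun ω => ω i - ∫ ω', ω' i ∂P + ω j

def outcome (i j : Fin 5) : (Fin 5 → ℝ) → ℝ :=
  fun ω => X ω + indicT T true ω + ω i - (∫ ω', ω' i ∂P) + ω j

lemma outcome_eq (i j : Fin 5) :
    outcome i j = (fun ω => X ω + indicT T true ω) + noise i j := by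
  ext ω; simp only [outcome, noise, Pi.add_apply]; ring

lemma measurable_decide_eq_one : Measurable fun x : ℝ => decide (x = 1) :=
  measurable_to_bool (by simp [Set.preimage])

lemma measurable_T : Measurable T := measurable_decide_eq_one.comp (measurable_pi_apply 0)

lemma hasLaw_coord (k : Fin 5) : HasLaw (fun ω => ω k) (ν k) P :=
  (measurePreserving_eval ν k).hasLaw

lemma iIndepFun_coord : iIndepFun (fun k (ω : Fin 5 → ℝ) => ω k) P :=
  iIndepFun_pi (X := fun _ => id) fun _ => aemeasurable_id

lemma memLp_coord (k : Fin 5) : MemLp (fun ω => ω k) 2 P := by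
  have h : MemLp id 2 (ν k) := by
    fin_cases k
    all_goals first | exact memLp_id_bernoulliHalf | exact memLp_id_gaussianReal 2
  rw [← (hasLaw_coord k).map_eq] at h
  exact (memLp_map_measure_iff h.1 (hasLaw_coord k).aemeasurable).1 h

lemma integral_indicT_T (t : Bool) : P[indicT T t] = 1 / 2 := by
  have h := (hasLaw_coord 0).integral_comp
    (f := fun x : ℝ => if decide (x = 1) = t then (1 : ℝ) else 0) (integrable_bernoulliHalf _).1
  rw [show ν 0 = bernoulliHalf from rfl, integral_bernoulliHalf] at h
  exact h.trans (by cases t <;> norm_num)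

lemma indepFun_XT_coord {i : Fin 5} (hi : i ≠ 0) :
    IndepFun (fun ω => (X ω, T ω)) (fun ω => ω i) P :=
  (iIndepFun_coord.indepFun hi.symm).comp (measurable_const.prodMk measurable_decide_eq_one)
    measurable_id

lemma indepFun_XTZ_coord {i j : Fin 5} (hj : j ≠ 0) (hij : i ≠ j) :
    IndepFun (fun ω => (X ω, T ω, ω i)) (fun ω => ω j) P :=
  (iIndepFun_coord.indepFun_prodMk (fun _ => measurable_pi_apply _) 0 i j hj.symm hij).comp
    (measurable_const.prodMk ((measurable_decide_eq_one.comp measurable_fst).prodMk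
      measurable_snd)) measurable_id

lemma indepFun_XT_noise {i j : Fin 5} (hi : i ≠ 0) (hj : j ≠ 0) :
    IndepFun (fun ω => (X ω, T ω)) (noise i j) P :=
  (iIndepFun_coord.indepFun_prodMk (fun _ => measurable_pi_apply _) i j 0 hi hj).symm.comp
    (measurable_const.prodMk measurable_decide_eq_one)
    ((measurable_fst.sub_const _).add measurable_snd)

lemma measurable_noise (i j : Fin 5) : Measurable (noise i j) :=
  ((measurable_pi_apply i).sub_const _).add (measurable_pi_apply j)

lemma measurable_outcome (i j : Fin 5) : Measurable (outcome i j) := by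
  rw [outcome_eq]
  exact (measurable_const.add (measurable_indicT measurable_T true)).add (measurable_noise i j)

lemma integrable_noise (i j : Fin 5) : Integrable (noise i j) P :=
  (((memLp_coord i).integrable one_le_two).sub (integrable_const _)).add
    ((memLp_coord j).integrable one_le_two)

lemma integral_noise (i : Fin 5) {j : Fin 5} (hj : ∫ x, x ∂ν j = 0) : P[noise i j] = 0 := by
  have hi := (memLp_coord i).integrable one_le_two
  have hc : Integrable (fun ω : Fin 5 → ℝ => ω i - ∫ ω', ω' i ∂P) P :=
    hi.sub (integrable_const _)
  simp only [noise]
  rw [integral_add hc ((memLp_coord j).integrable one_le_two),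
    integral_sub hi (integrable_const _), (hasLaw_coord j).integral_eq, hj]
  simp

lemma condExp_outcome {i j : Fin 5} (hi : i ≠ 0) (hj : j ≠ 0) (hε : ∫ x, x ∂ν j = 0) :
    P[outcome i j | MeasurableSpace.comap (fun ω => (X ω, T ω)) inferInstance]
      =ᵐ[P] fun ω => X ω + indicT T true ω := by
  have hXT : Measurable fun ω => (X ω, T ω) := measurable_const.prodMk measurable_T
  have hf : StronglyMeasurable[MeasurableSpace.comap (fun ω => (X ω, T ω)) inferInstance]
      fun ω => X ω + indicT T true ω :=
    ((measurable_fst.add (measurable_indicT measurable_snd true)).comp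
      (comap_measurable _)).stronglyMeasurable
  rw [outcome_eq]
  filter_upwards [condExp_comap_add_of_indepFun hXT hf
    ((integrable_const _).add (integrable_indicT measurable_T true)) (measurable_noise i j)
    (integrable_noise i j) (indepFun_XT_noise hi hj)] with ω hω
  simp [hω, integral_noise i hε]

lemma adjATE_outcome {i j : Fin 5} (hi : i ≠ 0) (hj : j ≠ 0) :
    adjATE P X T (outcome i j) = 1 := by
  have h : outcome i j = fun ω => indicT T true ω + noise i j ω := by
    rw [outcome_eq]; ext ω; simp [X]
  rw [h]
  exact adjATE_const_indicT_add 0 measurable_T (integrable_noise i j)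
    ((indepFun_XT_noise hi hj).symm.comp measurable_id measurable_snd)
    (by simp [integral_indicT_T]) (by simp [integral_indicT_T])

lemma integral_sq_outcome {i j : Fin 5} (hij : i ≠ j) (hε : ∫ x, x ∂ν j = 0) :
    ∫ ω, (outcome i j ω - (X ω + indicT T true ω)) ^ 2 ∂P = Var[id; ν i] + Var[id; ν j] := by
  rw [← (hasLaw_coord i).variance_eq, ← (hasLaw_coord j).variance_eq,
    ← integral_sq_sub_integral_add_of_indepFun (memLp_coord i) (memLp_coord j)
      (iIndepFun_coord.indepFun hij) (by rw [(hasLaw_coord j).integral_eq, hε])]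
  congr with ω
  simp only [outcome]
  ring

lemma not_ae_condDistrib_outcome_eq {i j k l : Fin 5}
    (h : ∫ ω, (outcome i j ω - (X ω + indicT T true ω)) ^ 2 ∂P
      ≠ ∫ ω, (outcome k l ω - (X ω + indicT T true ω)) ^ 2 ∂P) :
    ¬ ∀ᵐ b ∂P.map (fun ω => (X ω, T ω)),
      condDistrib (outcome i j) (fun ω => (X ω, T ω)) P b
        = condDistrib (outcome k l) (fun ω => (X ω, T ω)) P b := fun hae =>
  h <| integral_comp_prodMk_eq_of_condDistrib_ae_eq (measurable_const.prodMk measurable_T)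
    (measurable_outcome i j) (measurable_outcome k l) hae
    (g := fun p : (ℝ × Bool) × ℝ => (p.2 - (p.1.1 + indicT Prod.snd true p.1)) ^ 2)
    ((measurable_snd.sub (measurable_fst.fst.add
      ((measurable_indicT measurable_snd true).comp measurable_fst))).pow_const 2)

end ConfoundedExample

open ConfoundedExample

/-- Honest form of Proposition 1(ii): non-identifiability of the confounding structure.
There exist two confounded additive models `Y_i = X + T + Z_i − E[Z_i] + ε_i` (with
`Z₁ ~ Bernoulli(1/2)`, `Z₂ ~ N(1/2,1)`, `ε_i ~ N(0,1)`, the stated independences and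
positivity given `X`) such that (a) both have conditional mean `X + T` given `σ(X,T)` and
equal adjustment-formula ATE `1`; (b) both potential-outcome ATEs equal `1`; and (c)
`E[(Y₁−(X+T))²] = 5/4 ≠ 2 = E[(Y₂−(X+T))²]`, so the conditional distributions of `Y₁` and
`Y₂` given `(X,T)` differ. -/
theorem statement9 : ∃ (Ω : Type) (_ : MeasurableSpace Ω) (μ : Measure Ω)
    (hP : IsProbabilityMeasure μ),
    ∃ (X : Ω → ℝ) (T : Ω → Bool) (Z₁ Z₂ ε₁ ε₂ Y₁ Y₂ : Ω → ℝ),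
      Measurable X ∧ Measurable T ∧
      Integrable Z₁ μ ∧ Integrable Z₂ μ ∧
      Y₁ = (fun ω => X ω + indicT T true ω + Z₁ ω - (∫ ω', Z₁ ω' ∂μ) + ε₁ ω) ∧
      Y₂ = (fun ω => X ω + indicT T true ω + Z₂ ω - (∫ ω', Z₂ ω' ∂μ) + ε₂ ω) ∧
      IndepFun (fun ω => (X ω, T ω)) Z₁ μ ∧
      IndepFun (fun ω => (X ω, T ω)) Z₂ μ ∧
      Measure.map ε₁ μ = gaussianReal 0 1 ∧
      Measure.map ε₂ μ = gaussianReal 0 1 ∧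
      IndepFun (fun ω => (X ω, T ω, Z₁ ω)) ε₁ μ ∧
      IndepFun (fun ω => (X ω, T ω, Z₂ ω)) ε₂ μ ∧
      PositivityGiven μ X T ∧
      Measure.map Z₁ μ = bernoulliHalf ∧
      Measure.map Z₂ μ = gaussianReal (1 / 2) 1 ∧
      -- (a) equal conditional means and equal adjustment-formula ATEs
      (μ[Y₁ | MeasurableSpace.comap (fun ω => (X ω, T ω)) inferInstance]
          =ᵐ[μ] fun ω => X ω + indicT T true ω) ∧
      (μ[Y₂ | MeasurableSpace.comap (fun ω => (X ω, T ω)) inferInstance]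
          =ᵐ[μ] fun ω => X ω + indicT T true ω) ∧
      adjATE μ X T Y₁ = 1 ∧ adjATE μ X T Y₂ = 1 ∧
      -- (b) the potential-outcome ATE of each model equals 1
      (∫ ω, ((X ω + 1 + Z₁ ω - (∫ ω', Z₁ ω' ∂μ) + ε₁ ω)
            - (X ω + 0 + Z₁ ω - (∫ ω', Z₁ ω' ∂μ) + ε₁ ω)) ∂μ = 1) ∧
      (∫ ω, ((X ω + 1 + Z₂ ω - (∫ ω', Z₂ ω' ∂μ) + ε₂ ω)
            - (X ω + 0 + Z₂ ω - (∫ ω', Z₂ ω' ∂μ) + ε₂ ω)) ∂μ = 1) ∧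
      -- (c) the second conditional moments differ, so the conditional distributions differ
      (∫ ω, (Y₁ ω - (X ω + indicT T true ω)) ^ 2 ∂μ = 5 / 4) ∧
      (∫ ω, (Y₂ ω - (X ω + indicT T true ω)) ^ 2 ∂μ = 2) ∧
      ¬ (∀ᵐ b ∂(Measure.map (fun ω => (X ω, T ω)) μ),
          (@condDistrib Ω (ℝ × Bool) ℝ _ _ _ _ _ Y₁ (fun ω => (X ω, T ω)) μ
              (by haveI := hP; exact inferInstance : IsFiniteMeasure μ)) b
            = (@condDistrib Ω (ℝ × Bool) ℝ _ _ _ _ _ Y₂ (fun ω => (X ω, T ω)) μ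
              (by haveI := hP; exact inferInstance : IsFiniteMeasure μ)) b) := by
  have hmean₃ : ∫ x, x ∂ν 3 = 0 := integral_id_gaussianReal
  have hmean₄ : ∫ x, x ∂ν 4 = 0 := integral_id_gaussianReal
  have hsq₁ : ∫ ω, (outcome 1 3 ω - (X ω + indicT T true ω)) ^ 2 ∂P = 5 / 4 := by
    rw [integral_sq_outcome (by decide) hmean₃]
    simp [ν, variance_id_bernoulliHalf]
    norm_num
  have hsq₂ : ∫ ω, (outcome 2 4 ω - (X ω + indicT T true ω)) ^ 2 ∂P = 2 := by
    rw [integral_sq_outcome (by decide) hmean₄]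
    simp [ν]
    norm_num
  refine ⟨Fin 5 → ℝ, inferInstance, P, inferInstance, X, T, fun ω => ω 1, fun ω => ω 2,
    fun ω => ω 3, fun ω => ω 4, outcome 1 3, outcome 2 4, measurable_const, measurable_T,
    (memLp_coord 1).integrable one_le_two, (memLp_coord 2).integrable one_le_two, rfl, rfl,
    indepFun_XT_coord (by decide), indepFun_XT_coord (by decide), (hasLaw_coord 3).map_eq,
    (hasLaw_coord 4).map_eq, indepFun_XTZ_coord (by decide) (by decide),
    indepFun_XTZ_coord (by decide) (by decide),
    positivityGiven_const 0 (by simp [integral_indicT_T]) (by simp [integral_indicT_T]; norm_num),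
    (hasLaw_coord 1).map_eq, (hasLaw_coord 2).map_eq,
    condExp_outcome (by decide) (by decide) hmean₃, condExp_outcome (by decide) (by decide) hmean₄,
    adjATE_outcome (by decide) (by decide), adjATE_outcome (by decide) (by decide),
    by simp, by simp, hsq₁, hsq₂, not_ae_condDistrib_outcome_eq (by rw [hsq₁, hsq₂]; norm_num)⟩

end
end
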